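/- arXiv:math/0312264 — 4 statements merged into one kernel-verified Lean document; each statement's English description precedes it below -/
import Mathlib

section
/- Let A ∈ V_0 ⊗ ⋯ ⊗ V_p be a (p+1)-dimensional matrix of boundary format. Then A is nondegenerate if and only if there is no (p+1)-tuple (x_0, x_1, …, x_p) of nonzero functionals x_i ∈ V_i^∨ such that for every j ∈ {0, …, p} the contraction A(x_0, …, x_{j-1}, ·, x_{j+1}, …, x_p) is the zero linear form on V_j^∨ (i.e. the Segre product has no 'singular point' for A; this is the characterization Det A ≠ 0 ⟺ all the morphisms f_A^{(j)} are surjective). -/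
/-!
At a singular point `x`, every contraction `φ ↦ A(φ, x, …, ·, …, x) ∈ V j` has its range inside
the hyperplane `ker (x j)`, so it is not surjective. Conversely, if such a contraction with
nonzero `ξ` is not surjective, a nonzero `μ ∈ (V j)^∨` kills its range, and putting `μ` into
slot `j` of `ξ` gives an `x` for which `A(·, x, …, x)` vanishes on `(V 0)^∨`. For this `x`
each contraction `(V 0)^∨ → V i`, `i ≠ 0`, has rank at most `k i`, so their common kernel has
codimension at most `∑ k i = k 0 < dim (V 0)^∨`; any nonzero `φ` in it makes `(φ, x 1, …, x p)`
a singular point.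
-/

open Module Finset

variable {p : ℕ} {V : Fin (p + 1) → Type*}
  [∀ j, AddCommGroup (V j)] [∀ j, Module ℂ (V j)] [∀ j, FiniteDimensional ℂ (V j)]

/-- A `(p+1)`-dimensional matrix `A ∈ V 0 ⊗ ⋯ ⊗ V p`, viewed as a multilinear form on the
duals, is *nondegenerate* if for every `j ≠ 0` and every choice of nonzero functionals
`ξ i ∈ (V i)^∨` (for `i ∉ {0, j}`), the induced linear map `(V 0)^∨ → V j`,
`φ ↦ (the vector `v` with `lam v = A(φ, ξ₁, …, lam, …, ξ_p)` for all `lam`)`, is surjective. -/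
def TensorNondegenerate (A : MultilinearMap ℂ (fun j : Fin (p + 1) => Module.Dual ℂ (V j)) ℂ) :
    Prop :=
  ∀ j : Fin (p + 1), j ≠ 0 →
    ∀ ξ : ∀ i, Module.Dual ℂ (V i), (∀ i, i ≠ 0 → i ≠ j → ξ i ≠ 0) →
      ∀ v : V j, ∃ φ : Module.Dual ℂ (V 0),
        ∀ lam : Module.Dual ℂ (V j),
          A (Function.update (Function.update ξ 0 φ) j lam) = lam v

open Function LinearMap

theorem LinearMap.finrank_le_finrank_iInf_ker_add_sum {K W ι : Type*} [DivisionRing K]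
    [AddCommGroup W] [Module K W] [FiniteDimensional K W] {X : ι → Type*}
    [∀ i, AddCommGroup (X i)] [∀ i, Module K (X i)] (f : ∀ i, W →ₗ[K] X i) (s : Finset ι) :
    finrank K W ≤ finrank K ↥(⨅ i ∈ s, ker (f i)) + ∑ i ∈ s, finrank K (range (f i)) := by
  classical
  induction s using Finset.induction with
  | empty =>
    rw [show (⨅ i ∈ (∅ : Finset ι), ker (f i)) = ⊤ by simp, finrank_top]
    simp
  | @insert a s ha ih =>
    rw [Finset.iInf_insert, Finset.sum_insert ha]
    have := Submodule.finrank_sup_add_finrank_inf_eq (ker (f a)) (⨅ i ∈ s, ker (f i))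
    have := Submodule.finrank_le (ker (f a) ⊔ ⨅ i ∈ s, ker (f i))
    have := (f a).finrank_range_add_finrank_ker
    omega

namespace MultilinearMap

variable {K ι : Type*} [Field K] [DecidableEq ι] {E : ι → Type*}
  [∀ i, AddCommGroup (E i)] [∀ i, Module K (E i)] [∀ i, FiniteDimensional K (E i)]
  (A : MultilinearMap K (fun i => Dual K (E i)) K)

def IsSingularPoint (x : ∀ i, Dual K (E i)) : Prop :=
  (∀ i, x i ≠ 0) ∧ ∀ j (lam : Dual K (E j)), A (update x j lam) = 0

/-- The map `f_A^{(j)}` of the paper, with the free slot `i` in place of `0`. -/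
noncomputable def contraction (x : ∀ i, Dual K (E i)) {i j : ι} (hij : i ≠ j) :
    Dual K (E i) →ₗ[K] E j :=
  (evalEquiv K (E j)).symm.toLinearMap ∘ₗ
    LinearMap.mk₂ K (fun φ lam => A (update (update x i φ) j lam))
      (fun φ ψ lam => by simp only [update_comm hij, A.map_update_add])
      (fun c φ lam => by simp only [update_comm hij, A.map_update_smul, smul_eq_mul])
      (fun φ lam lam' => A.map_update_add _ j lam lam')
      (fun c φ lam => A.map_update_smul _ j c lam)

@[simp]
theorem apply_contraction (x : ∀ i, Dual K (E i)) {i j : ι} (hij : i ≠ j) (φ : Dual K (E i))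
    (lam : Dual K (E j)) :
    lam (A.contraction x hij φ) = A (update (update x i φ) j lam) := by
  simp [contraction]

theorem range_contraction_le_ker {x : ∀ i, Dual K (E i)} {i j : ι} (hij : i ≠ j)
    (hx : ∀ φ, A (update x i φ) = 0) :
    LinearMap.range (A.contraction x hij) ≤ LinearMap.ker (x j) := by
  rintro _ ⟨φ, rfl⟩
  rw [LinearMap.mem_ker, apply_contraction, ← update_of_ne hij.symm φ x, update_eq_self, hx]

theorem finrank_range_contraction_add_one_le {x : ∀ i, Dual K (E i)} {i j : ι} (hij : i ≠ j)
    (hx : ∀ φ, A (update x i φ) = 0) (hxj : x j ≠ 0) :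
    finrank K (LinearMap.range (A.contraction x hij)) + 1 ≤ finrank K (E j) := by
  rw [← (x j).finrank_ker_add_one_of_ne_zero hxj]
  exact Nat.add_le_add_right (Submodule.finrank_mono (A.range_contraction_le_ker hij hx)) 1

variable {A} in
theorem IsSingularPoint.not_surjective_contraction {x : ∀ i, Dual K (E i)}
    (hx : A.IsSingularPoint x) {i j : ι} (hij : i ≠ j) :
    ¬ Surjective (A.contraction x hij) := by
  intro hsurj
  have hker : ⊤ ≤ LinearMap.ker (x j) :=
    LinearMap.range_eq_top.2 hsurj ▸ A.range_contraction_le_ker hij (hx.2 i)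
  exact hx.1 j (LinearMap.ker_eq_top.1 (top_le_iff.1 hker))

theorem exists_ne_zero_forall_update_eq_zero_of_not_surjective {x : ∀ i, Dual K (E i)}
    {i j : ι} (hij : i ≠ j) (h : ¬ Surjective (A.contraction x hij)) :
    ∃ μ : Dual K (E j), μ ≠ 0 ∧ ∀ φ, A (update (update x j μ) i φ) = 0 := by
  obtain ⟨μ, hμ, hrange⟩ := (LinearMap.range (A.contraction x hij)).exists_le_ker_of_lt_top
    (lt_top_iff_ne_top.2 (LinearMap.range_eq_top.not.2 h))
  refine ⟨μ, hμ, fun φ => ?_⟩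
  rw [update_comm hij.symm, ← A.apply_contraction x hij]
  exact hrange ⟨φ, rfl⟩

theorem exists_ne_zero_forall_contraction_eq_zero [Fintype ι] {x : ∀ i, Dual K (E i)} {i₀ : ι}
    (k : ι → ℕ) (hdim : ∀ i, finrank K (E i) = k i + 1) (hbf : ∑ i ∈ univ.erase i₀, k i ≤ k i₀)
    (hx : ∀ i, i ≠ i₀ → x i ≠ 0) (h₀ : ∀ φ, A (update x i₀ φ) = 0) :
    ∃ φ : Dual K (E i₀), φ ≠ 0 ∧ ∀ i (hi : i₀ ≠ i), A.contraction x hi φ = 0 := by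
  let c : ∀ i : {i // i ≠ i₀}, Dual K (E i₀) →ₗ[K] E i := fun i => A.contraction x i.2.symm
  have hrank : ∑ i, finrank K (LinearMap.range (c i)) ≤ k i₀ := calc
    _ ≤ ∑ i : {i // i ≠ i₀}, k i := sum_le_sum fun i _ => Nat.le_of_add_le_add_right
      (hdim i ▸ A.finrank_range_contraction_add_one_le i.2.symm h₀ (hx i i.2))
    _ = ∑ i ∈ univ.erase i₀, k i := (sum_subtype _ (by simp) k).symm
    _ ≤ k i₀ := hbf
  have hcount := LinearMap.finrank_le_finrank_iInf_ker_add_sum c univ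
  rw [Subspace.dual_finrank_eq, hdim] at hcount
  have hpos : 1 ≤ finrank K ↥(⨅ i ∈ univ, LinearMap.ker (c i)) := by omega
  obtain ⟨φ, hφ, hφ0⟩ :=
    Submodule.exists_mem_ne_zero_of_ne_bot (Submodule.one_le_finrank_iff.1 hpos)
  refine ⟨φ, hφ0, fun i hi => ?_⟩
  simpa using (Submodule.mem_iInf _).1 ((Submodule.mem_iInf _).1 hφ ⟨i, hi.symm⟩) (mem_univ _)

theorem isSingularPoint_update {x : ∀ i, Dual K (E i)} {i₀ : ι} {φ : Dual K (E i₀)}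
    (hx : ∀ i, i ≠ i₀ → x i ≠ 0) (h₀ : ∀ ψ, A (update x i₀ ψ) = 0) (hφ : φ ≠ 0)
    (hc : ∀ i (hi : i₀ ≠ i), A.contraction x hi φ = 0) :
    A.IsSingularPoint (update x i₀ φ) := by
  refine ⟨fun i => ?_, fun j lam => ?_⟩
  · by_cases hi : i = i₀
    · subst hi
      simpa using hφ
    · simpa [update_of_ne hi] using hx i hi
  · by_cases hj : j = i₀
    · subst hj
      simpa using h₀ lam
    · rw [← apply_contraction A x (Ne.symm hj), hc j (Ne.symm hj)]
      exact lam.map_zero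

end MultilinearMap

theorem tensorNondegenerate_iff_forall_surjective_contraction
    (A : MultilinearMap ℂ (fun j : Fin (p + 1) => Dual ℂ (V j)) ℂ) :
    TensorNondegenerate A ↔ ∀ j (hj : j ≠ 0) (ξ : ∀ i, Dual ℂ (V i)),
      (∀ i, i ≠ 0 → i ≠ j → ξ i ≠ 0) → Surjective (A.contraction ξ hj.symm) := by
  refine forall₂_congr fun j hj => forall₂_congr fun ξ _ =>
    forall_congr' fun v => exists_congr fun φ => ?_
  simp only [← A.apply_contraction ξ hj.symm]
  exact ⟨fun h => (evalEquiv ℂ (V j)).injective (LinearMap.ext h), fun h lam => h ▸ rfl⟩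

theorem nondegenerate_iff_no_singular_point_general
    (hp : 2 ≤ p) (k : Fin (p + 1) → ℕ)
    (hdim : ∀ j, Module.finrank ℂ (V j) = k j + 1)
    (hbf : k 0 = ∑ j ∈ Finset.univ.erase (0 : Fin (p + 1)), k j)
    (A : MultilinearMap ℂ (fun j : Fin (p + 1) => Module.Dual ℂ (V j)) ℂ) :
    TensorNondegenerate A ↔
      ¬ ∃ x : ∀ i, Module.Dual ℂ (V i), (∀ i, x i ≠ 0) ∧
        ∀ j : Fin (p + 1), ∀ lam : Module.Dual ℂ (V j),
          A (Function.update x j lam) = 0 := by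
  change _ ↔ ¬ ∃ x, A.IsSingularPoint x
  rw [tensorNondegenerate_iff_forall_surjective_contraction]
  constructor
  · rintro hsurj ⟨x, hx⟩
    have hlast : Fin.last p ≠ 0 := by
      simp only [ne_eq, Fin.ext_iff, Fin.val_last, Fin.val_zero]
      omega
    exact hx.not_surjective_contraction hlast.symm (hsurj _ hlast x fun i _ _ => hx.1 i)
  · intro hns j hj ξ hξ
    by_contra hnot
    obtain ⟨μ, hμ, h₀⟩ := A.exists_ne_zero_forall_update_eq_zero_of_not_surjective hj.symm hnot
    have hx : ∀ i, i ≠ 0 → update ξ j μ i ≠ 0 := by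
      intro i hi
      by_cases hij : i = j
      · subst hij
        simpa using hμ
      · simpa [update_of_ne hij] using hξ i hi hij
    obtain ⟨φ, hφ, hc⟩ := A.exists_ne_zero_forall_contraction_eq_zero k hdim hbf.ge hx h₀
    exact hns ⟨_, A.isSingularPoint_update hx h₀ hφ hc⟩

/-- A boundary format matrix `A` is nondegenerate if and only if there is no
`(p+1)`-tuple of nonzero functionals `x i ∈ (V i)^∨` such that for every `j` the contraction
`A (x 0, …, ·, …, x p)` is the zero linear form on `(V j)^∨`. -/
theorem nondegenerate_iff_no_singular_point
    (hp : 2 ≤ p) (k : Fin (p + 1) → ℕ) (hk : ∀ j, 1 ≤ k j)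
    (hdim : ∀ j, Module.finrank ℂ (V j) = k j + 1)
    (hbf : k 0 = ∑ j ∈ Finset.univ.erase (0 : Fin (p + 1)), k j)
    (A : MultilinearMap ℂ (fun j : Fin (p + 1) => Module.Dual ℂ (V j)) ℂ) :
    TensorNondegenerate A ↔
      ¬ ∃ x : ∀ i, Module.Dual ℂ (V i), (∀ i, x i ≠ 0) ∧
        ∀ j : Fin (p + 1), ∀ lam : Module.Dual ℂ (V j),
          A (Function.update x j lam) = 0 :=
  nondegenerate_iff_no_singular_point_general hp k hdim hbf A
end

section
/- Let A ∈ V_0 ⊗ ⋯ ⊗ V_p be a nondegenerate matrix of boundary format, let (φ, v_j, h) be a (j)-weak jumping hyperplane for A, and let v_0 ∈ V_0 be a vector with φ(v_0) = 1. Then the elementary transformation A'_j ∈ (V_0/ℂv_0) ⊗ V_1 ⊗ ⋯ ⊗ (V_j/ℂv_j) ⊗ ⋯ ⊗ V_p is again a matrix of boundary format, and it is nondegenerate. -/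
/-!
Pull all data back along the projections `π i`. Nondegeneracy of `A` supplies a functional `φ'`
on `V 0` for the pulled-back data; `φ' - φ' v₀ • φ` vanishes on `v₀`, hence descends to
`V 0 / ℂv₀`, and the correction is invisible because contracting `A` with `φ` gives `vj ⊗ h`,
which every functional pulled back from `V j / ℂvj` kills. Boundary format is a dimension count.
-/

open Module Finset

variable {p : ℕ} {V : Fin (p + 1) → Type*}
  [∀ j, AddCommGroup (V j)] [∀ j, Module ℂ (V j)] [∀ j, FiniteDimensional ℂ (V j)]

/-- `(φ, vj, h)` is a `(j)`-weak jumping hyperplane for `A`: `φ`, `vj`, `h` are nonzero and the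
contraction `(φ ⊗ id)(A)` equals `vj ⊗ h`, where the tensor
`h ∈ V 1 ⊗ ⋯ ⊗ V (j-1) ⊗ V (j+1) ⊗ ⋯ ⊗ V p` is viewed as a multilinear form on the duals of
the remaining factors. -/
def IsWeakJump (j : Fin (p + 1))
    (A : MultilinearMap ℂ (fun i : Fin (p + 1) => Module.Dual ℂ (V i)) ℂ)
    (φ : Module.Dual ℂ (V 0)) (vj : V j)
    (h : MultilinearMap ℂ
      (fun i : {i : Fin (p + 1) // i ≠ 0 ∧ i ≠ j} => Module.Dual ℂ (V i)) ℂ) : Prop :=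
  φ ≠ 0 ∧ vj ≠ 0 ∧ h ≠ 0 ∧
    ∀ ξ : ∀ i, Module.Dual ℂ (V i),
      A (Function.update ξ 0 φ) = ξ j vj * h (fun i => ξ i)

theorem Finset.sum_ite_eq_sum_sub_one {ι : Type*} [DecidableEq ι] {s : Finset ι} {k : ι → ℕ}
    {j : ι} (hj : j ∈ s) (hkj : 1 ≤ k j) :
    ∑ i ∈ s, (if i = j then k i - 1 else k i) = ∑ i ∈ s, k i - 1 := by
  rw [← Finset.add_sum_erase s _ hj, ← Finset.add_sum_erase s k hj, if_pos rfl,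
    Finset.sum_congr rfl fun i hi => if_neg (Finset.mem_erase.1 hi).1]
  exact (Nat.sub_add_comm hkj).symm

theorem LinearMap.finrank_add_finrank_ker_of_surjective {K M N : Type*} [Field K]
    [AddCommGroup M] [Module K M] [FiniteDimensional K M] [AddCommGroup N] [Module K N]
    {f : M →ₗ[K] N} (hf : Function.Surjective f) :
    finrank K N + finrank K (LinearMap.ker f) = finrank K M := by
  rw [← f.finrank_range_add_finrank_ker, LinearMap.range_eq_top.2 hf, finrank_top]

section

variable {U W : Fin (p + 1) → Type*} [∀ i, AddCommGroup (U i)] [∀ i, Module ℂ (U i)]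
  [∀ i, AddCommGroup (W i)] [∀ i, Module ℂ (W i)]

theorem IsWeakJump.apply_update_dualMap_eq_zero
    {A : MultilinearMap ℂ (fun i => Dual ℂ (U i)) ℂ} {j : Fin (p + 1)} {φ : Dual ℂ (U 0)}
    {vj : U j} {h : MultilinearMap ℂ (fun i : {i : Fin (p + 1) // i ≠ 0 ∧ i ≠ j} => Dual ℂ (U i)) ℂ}
    (hjump : IsWeakJump j A φ vj h) (π : ∀ i, U i →ₗ[ℂ] W i) (hvj : π j vj = 0)
    (ξ : ∀ i, Dual ℂ (W i)) :
    A (Function.update (fun i => (π i).dualMap (ξ i)) 0 φ) = 0 := by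
  rw [hjump.2.2.2, LinearMap.dualMap_apply, hvj, map_zero, zero_mul]

theorem TensorNondegenerate.compLinearMap_dualMap
    {A : MultilinearMap ℂ (fun i => Dual ℂ (U i)) ℂ} (hnd : TensorNondegenerate A)
    {j : Fin (p + 1)} {φ : Dual ℂ (U 0)} {vj : U j}
    {h : MultilinearMap ℂ (fun i : {i : Fin (p + 1) // i ≠ 0 ∧ i ≠ j} => Dual ℂ (U i)) ℂ}
    (hjump : IsWeakJump j A φ vj h) {v₀ : U 0} (hv₀ : φ v₀ = 1) {π : ∀ i, U i →ₗ[ℂ] W i}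
    (hsurj : ∀ i, Function.Surjective (π i)) (hker0 : LinearMap.ker (π 0) ≤ Submodule.span ℂ {v₀})
    (hvj : π j vj = 0) :
    TensorNondegenerate (A.compLinearMap fun i => (π i).dualMap) := by
  intro j' hj' ξ hξ w
  obtain ⟨v, rfl⟩ := hsurj j' w
  obtain ⟨φ', hφ'⟩ := hnd j' hj' (fun i => (π i).dualMap (ξ i))
    (fun i hi0 hij' => (map_ne_zero_iff _ (LinearMap.dualMap_injective_of_surjective (hsurj i))).2
      (hξ i hi0 hij')) v
  obtain ⟨ψ, hψ⟩ : φ' - φ' v₀ • φ ∈ LinearMap.range (π 0).dualMap := by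
    rw [LinearMap.range_dualMap_eq_dualAnnihilator_ker_of_surjective _ (hsurj 0),
      Submodule.mem_dualAnnihilator]
    intro x hx
    obtain ⟨c, rfl⟩ := Submodule.mem_span_singleton.1 (hker0 hx)
    simp [hv₀]
  have hpull : ∀ (ζ : ∀ i, Dual ℂ (W i)) i (x : Dual ℂ (W i)),
      (fun k => (π k).dualMap (Function.update ζ i x k)) =
        Function.update (fun k => (π k).dualMap (ζ k)) i ((π i).dualMap x) :=
    fun ζ i x => funext (Function.apply_update _ ζ i x)
  refine ⟨ψ, fun lam => ?_⟩
  rw [MultilinearMap.compLinearMap_apply, Function.update_comm (Ne.symm hj'), hpull, hψ,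
    MultilinearMap.map_update_sub, MultilinearMap.map_update_smul,
    hjump.apply_update_dualMap_eq_zero π hvj, smul_zero, sub_zero, hpull,
    ← Function.update_comm (Ne.symm hj'), hφ', LinearMap.dualMap_apply]

end

theorem elementary_transformation_nondegenerate_general
    (k : Fin (p + 1) → ℕ) (hk : ∀ j, 1 ≤ k j)
    (hdim : ∀ j, Module.finrank ℂ (V j) = k j + 1)
    (hbf : k 0 = ∑ j ∈ Finset.univ.erase (0 : Fin (p + 1)), k j)
    (A : MultilinearMap ℂ (fun j : Fin (p + 1) => Module.Dual ℂ (V j)) ℂ)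
    (hnd : TensorNondegenerate A)
    (j : Fin (p + 1)) (hj : j ≠ 0)
    (φ : Module.Dual ℂ (V 0)) (vj : V j)
    (h : MultilinearMap ℂ
      (fun i : {i : Fin (p + 1) // i ≠ 0 ∧ i ≠ j} => Module.Dual ℂ (V i)) ℂ)
    (hjump : IsWeakJump j A φ vj h)
    (v₀ : V 0) (hv₀ : φ v₀ = 1)
    (W : Fin (p + 1) → Type*) [∀ i, AddCommGroup (W i)] [∀ i, Module ℂ (W i)]
    (π : ∀ i, V i →ₗ[ℂ] W i) (hsurj : ∀ i, Function.Surjective (π i))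
    (hker0 : LinearMap.ker (π 0) = Submodule.span ℂ {v₀})
    (hkerj : LinearMap.ker (π j) = Submodule.span ℂ {vj})
    (hkero : ∀ i, i ≠ 0 → i ≠ j → LinearMap.ker (π i) = ⊥) :
    (∀ i, Module.finrank ℂ (W i) =
        (if i = 0 then k 0 - 1 else if i = j then k j - 1 else k i) + 1) ∧
    ((k 0 - 1 : ℕ) = ∑ i ∈ Finset.univ.erase (0 : Fin (p + 1)),
        (if i = j then k i - 1 else k i)) ∧
    TensorNondegenerate (A.compLinearMap fun i => (π i).dualMap) := by
  have hv₀ne : v₀ ≠ 0 := by rintro rfl; simp at hv₀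
  refine ⟨fun i => ?_, ?_, ?_⟩
  · have hrank := (π i).finrank_add_finrank_ker_of_surjective (hsurj i)
    rw [hdim] at hrank
    split_ifs with hi0 hij
    · subst hi0
      rw [hker0, finrank_span_singleton hv₀ne] at hrank
      have := hk 0
      omega
    · subst hij
      rw [hkerj, finrank_span_singleton hjump.2.1] at hrank
      have := hk i
      omega
    · rw [hkero i hi0 hij, finrank_bot] at hrank
      omega
  · rw [Finset.sum_ite_eq_sum_sub_one (Finset.mem_erase.2 ⟨hj, Finset.mem_univ j⟩) (hk j), hbf]
  · exact hnd.compLinearMap_dualMap hjump hv₀ hsurj hker0.le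
      (LinearMap.mem_ker.1 (hkerj.ge (Submodule.mem_span_singleton_self vj)))

/-- Let `A` be a nondegenerate boundary format matrix, `(φ, vj, h)` a
`(j)`-weak jumping hyperplane and `v₀ ∈ V 0` with `φ v₀ = 1`.  The elementary transformation
`A'` of `A` — the image of `A` in `(V 0 / ℂv₀) ⊗ V 1 ⊗ ⋯ ⊗ (V j / ℂvj) ⊗ ⋯ ⊗ V p`, here
realized via surjections `π i : V i → W i` with `ker (π 0) = ℂv₀`, `ker (π j) = ℂvj`, and
`π i` bijective for `i ∉ {0, j}` — is again of boundary format and is nondegenerate. -/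
theorem elementary_transformation_nondegenerate
    (hp : 2 ≤ p) (k : Fin (p + 1) → ℕ) (hk : ∀ j, 1 ≤ k j)
    (hdim : ∀ j, Module.finrank ℂ (V j) = k j + 1)
    (hbf : k 0 = ∑ j ∈ Finset.univ.erase (0 : Fin (p + 1)), k j)
    (A : MultilinearMap ℂ (fun j : Fin (p + 1) => Module.Dual ℂ (V j)) ℂ)
    (hnd : TensorNondegenerate A)
    (j : Fin (p + 1)) (hj : j ≠ 0)
    (φ : Module.Dual ℂ (V 0)) (vj : V j)
    (h : MultilinearMap ℂ
      (fun i : {i : Fin (p + 1) // i ≠ 0 ∧ i ≠ j} => Module.Dual ℂ (V i)) ℂ)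
    (hjump : IsWeakJump j A φ vj h)
    (v₀ : V 0) (hv₀ : φ v₀ = 1)
    (W : Fin (p + 1) → Type*) [∀ i, AddCommGroup (W i)] [∀ i, Module ℂ (W i)]
    (π : ∀ i, V i →ₗ[ℂ] W i) (hsurj : ∀ i, Function.Surjective (π i))
    (hker0 : LinearMap.ker (π 0) = Submodule.span ℂ {v₀})
    (hkerj : LinearMap.ker (π j) = Submodule.span ℂ {vj})
    (hkero : ∀ i, i ≠ 0 → i ≠ j → LinearMap.ker (π i) = ⊥) :
    (∀ i, Module.finrank ℂ (W i) =
        (if i = 0 then k 0 - 1 else if i = j then k j - 1 else k i) + 1) ∧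
    ((k 0 - 1 : ℕ) = ∑ i ∈ Finset.univ.erase (0 : Fin (p + 1)),
        (if i = j then k i - 1 else k i)) ∧
    TensorNondegenerate (A.compLinearMap fun i => (π i).dualMap) :=
  elementary_transformation_nondegenerate_general k hk hdim hbf A hnd j hj φ vj h hjump v₀ hv₀ W π
    hsurj hker0 hkerj hkero
end

section
/- Let k ≥ 2, let p = 2, and let V_0, V_1, V_2 be complex vector spaces with dim V_0 = k+1, dim V_1 = 2, dim V_2 = k (so matrices in V_0 ⊗ V_1 ⊗ V_2 have format (k+1) × 2 × k and are of boundary format, with k_0 = k, k_1 = 1, k_2 = k−1). Then every nondegenerate matrix A ∈ V_0 ⊗ V_1 ⊗ V_2 is an identity; consequently, any two nondegenerate matrices of this format are equivalent under the action of GL(V_0) × GL(V_1) × GL(V_2). -/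
/-!
Fix a basis of `V 1` with dual basis `f₀, f₁`. Contracting `A` with `f₁` and with `f₀` gives maps
`M N : V 0^∨ → V 2` from dimension `k + 1` to dimension `k`, and nondegeneracy says that every
nonzero member `a • M + b • N` of their pencil is surjective. Such a pencil is one Kronecker block.
A dimension count gives a nonzero chain `u₀, …, u_k` with `M u₀ = 0`, `M u_{i+1} = N u_i` and
`N u_k = 0`, and its span `U` is everything: otherwise `M` and `N` induce a pencil
`V 0^∨ ⧸ U → V 2 ⧸ M U` with nonzero source not larger than its target whose members are all
surjective, while over `ℂ` a square pencil has a singular member. Hence the `u_i` and the `N u_i`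
(`i < k`) are bases, and `A (u_i, f_c, (N u_b)^∨) = 1` if `i = c + b` and `0` otherwise.
-/

open Module Finset

variable {p : ℕ} {V : Fin (p + 1) → Type*}
  [∀ j, AddCommGroup (V j)] [∀ j, Module ℂ (V j)] [∀ j, FiniteDimensional ℂ (V j)]

/-- `A` is an identity matrix: in suitable bases its coefficients are `1` exactly when
`i₀ = i₁ + ⋯ + i_p` and `0` otherwise. -/
def IsIdentityTensor (k : Fin (p + 1) → ℕ)
    (A : MultilinearMap ℂ (fun j : Fin (p + 1) => Module.Dual ℂ (V j)) ℂ) : Prop :=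
  ∃ e : ∀ j, Basis (Fin (k j + 1)) ℂ (V j),
    ∀ ξ : ∀ i, Module.Dual ℂ (V i),
      A ξ = ∑ ind ∈ Finset.univ.filter
          (fun ind : ∀ j, Fin (k j + 1) =>
            (ind 0 : ℕ) = ∑ j ∈ Finset.univ.erase (0 : Fin (p + 1)), (ind j : ℕ)),
        ∏ j, ξ j (e j (ind j))

section Pencil

variable {K X Y : Type*} [Field K] [AddCommGroup X] [Module K X] [AddCommGroup Y] [Module K Y]

def IsSurjectivePencil (M N : X →ₗ[K] Y) : Prop :=
  ∀ a b : K, (a ≠ 0 ∨ b ≠ 0) → Function.Surjective (a • M + b • N)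

theorem IsSurjectivePencil.mapQ {M N : X →ₗ[K] Y} (h : IsSurjectivePencil M N)
    (U : Submodule K X) (Z : Submodule K Y) (hM : U ≤ Z.comap M) (hN : U ≤ Z.comap N) :
    IsSurjectivePencil (U.mapQ Z M hM) (U.mapQ Z N hN) := by
  intro a b hab y
  obtain ⟨y, rfl⟩ := Submodule.Quotient.mk_surjective Z y
  obtain ⟨x, rfl⟩ := h a b hab y
  exact ⟨Submodule.Quotient.mk x, by simp [Submodule.mapQ_apply]⟩

variable [FiniteDimensional K X] [FiniteDimensional K Y]

theorem not_isSurjectivePencil_of_finrank_le [IsAlgClosed K] [Nontrivial X] (M N : X →ₗ[K] Y)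
    (hdim : finrank K X ≤ finrank K Y) : ¬ IsSurjectivePencil M N := by
  intro h
  have hN : Function.Surjective N := by simpa using h 0 1 (Or.inr one_ne_zero)
  have hdim' : finrank K X = finrank K Y :=
    hdim.antisymm (LinearMap.finrank_le_finrank_of_surjective hN)
  have hNinj : Function.Injective N :=
    (LinearMap.injective_iff_surjective_of_finrank_eq_finrank hdim').2 hN
  let Ne := LinearEquiv.ofBijective N ⟨hNinj, hN⟩
  obtain ⟨μ, hμ⟩ := Module.End.exists_eigenvalue (Ne.symm.toLinearMap ∘ₗ M)
  obtain ⟨x, hx⟩ := hμ.exists_hasEigenvector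
  have hMx : M x = μ • N x := by
    have := congrArg Ne hx.apply_eq_smul
    rwa [LinearMap.comp_apply, LinearEquiv.coe_coe, LinearEquiv.apply_symm_apply, map_smul] at this
  have hinj := (LinearMap.injective_iff_surjective_of_finrank_eq_finrank hdim').2
    (h 1 (-μ) (Or.inl one_ne_zero))
  exact hx.2 (hinj (by simp [hMx]))

theorem Submodule.eq_top_of_map_le_map_of_isSurjectivePencil [IsAlgClosed K]
    {M N : X →ₗ[K] Y} (h : IsSurjectivePencil M N) (hdim : finrank K X = finrank K Y + 1)
    {U : Submodule K X} (hNU : U.map N ≤ U.map M) (hU : ∃ x ∈ U, x ≠ 0 ∧ M x = 0) :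
    U = ⊤ := by
  by_contra hne
  have : Nontrivial (X ⧸ U) := Submodule.Quotient.nontrivial_iff.2 hne
  obtain ⟨x, hxU, hx0, hMx⟩ := hU
  have hker : 1 ≤ finrank K (LinearMap.ker (M.domRestrict U)) :=
    Submodule.one_le_finrank_iff.2 <| (Submodule.ne_bot_iff _).2
      ⟨⟨x, hxU⟩, by simpa using hMx, by simpa using hx0⟩
  have hrank := LinearMap.finrank_range_add_finrank_ker (M.domRestrict U)
  rw [LinearMap.range_domRestrict] at hrank
  have hqX := U.finrank_quotient_add_finrank
  have hqY := (U.map M).finrank_quotient_add_finrank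
  exact not_isSurjectivePencil_of_finrank_le _ _ (by omega)
    (h.mapQ U (U.map M) (Submodule.le_comap_map M U) (Submodule.map_le_iff_le_comap.1 hNU))

structure IsKroneckerChain (M N : X →ₗ[K] Y) {n : ℕ} (u : Fin (n + 1) → X) : Prop where
  apply_zero : M (u 0) = 0
  apply_succ : ∀ i : Fin n, M (u i.succ) = N (u i.castSucc)
  apply_last : N (u (Fin.last n)) = 0

theorem exists_isKroneckerChain (M N : X →ₗ[K] Y) {n : ℕ}
    (hdim : finrank K X = finrank K Y + 1) (hn : finrank K Y ≤ n) :
    ∃ u : Fin (n + 1) → X, u ≠ 0 ∧ IsKroneckerChain M N u := by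
  let Φ : (Fin (n + 1) → X) →ₗ[K] Y × (Fin n → Y) × Y :=
    (M ∘ₗ LinearMap.proj 0).prod <|
      (LinearMap.pi fun i => M ∘ₗ LinearMap.proj i.succ - N ∘ₗ LinearMap.proj i.castSucc).prod
        (N ∘ₗ LinearMap.proj (Fin.last n))
  have hlt : finrank K (Y × (Fin n → Y) × Y) < finrank K (Fin (n + 1) → X) := by
    simp only [Module.finrank_prod, Module.finrank_pi_fintype, Finset.sum_const,
      Finset.card_univ, Fintype.card_fin, smul_eq_mul, hdim]
    nlinarith
  obtain ⟨u, hu, hu0⟩ :=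
    (Submodule.ne_bot_iff _).1 (LinearMap.ker_ne_bot_of_finrank_lt (f := Φ) hlt)
  simp only [Φ, LinearMap.ker_prod, Submodule.mem_inf, LinearMap.mem_ker, LinearMap.coe_comp,
    LinearMap.coe_proj, Function.comp_apply, Function.eval, funext_iff, LinearMap.pi_apply,
    LinearMap.sub_apply, Pi.zero_apply, sub_eq_zero] at hu
  exact ⟨u, hu0, hu.1, hu.2.1, hu.2.2⟩

variable [IsAlgClosed K] {M N : X →ₗ[K] Y}

theorem IsKroneckerChain.span_eq_top {n : ℕ} {u : Fin (n + 1) → X} (hu : IsKroneckerChain M N u)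
    (hu0 : u ≠ 0) (h : IsSurjectivePencil M N) (hdim : finrank K X = finrank K Y + 1) :
    Submodule.span K (Set.range u) = ⊤ := by
  refine Submodule.eq_top_of_map_le_map_of_isSurjectivePencil h hdim ?_ ?_
  · rw [Submodule.map_span, Submodule.span_le]
    rintro _ ⟨_, ⟨j, rfl⟩, rfl⟩
    induction j using Fin.lastCases with
    | last => rw [hu.apply_last]; exact zero_mem _
    | cast i =>
      rw [← hu.apply_succ]
      exact Submodule.mem_map_of_mem (Submodule.subset_span ⟨i.succ, rfl⟩)
  · by_contra! hker
    have hzero : ∀ j, M (u j) = 0 → u j = 0 := fun j hj =>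
      by_contra fun hne => hker _ (Submodule.subset_span ⟨j, rfl⟩) hne hj
    refine hu0 (funext fun j => ?_)
    induction j using Fin.induction with
    | zero => exact hzero 0 hu.apply_zero
    | succ i ih => exact hzero _ (by rw [hu.apply_succ, ih, Pi.zero_apply, map_zero])

theorem IsSurjectivePencil.exists_basis_kronecker (h : IsSurjectivePencil M N) {n : ℕ}
    (hX : finrank K X = n + 1) (hY : finrank K Y = n) :
    ∃ (u : Basis (Fin (n + 1)) K X) (w : Basis (Fin n) K Y), ∀ i b,
      w.repr (N (u i)) b = (if (i : ℕ) = b then 1 else 0) ∧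
      w.repr (M (u i)) b = if (i : ℕ) = 1 + b then 1 else 0 := by
  have hdim : finrank K X = finrank K Y + 1 := by omega
  obtain ⟨u, hu0, hu⟩ := exists_isKroneckerChain M N hdim hY.le
  have hspan := hu.span_eq_top hu0 h hdim
  have hN : Function.Surjective N := by simpa using h 0 1 (Or.inr one_ne_zero)
  have hNspan : Submodule.span K (Set.range fun i : Fin n => N (u i.castSucc)) = ⊤ := by
    refine eq_top_iff.2 ?_
    calc ⊤ = (Submodule.span K (Set.range u)).map N := by
          rw [hspan, Submodule.map_top, LinearMap.range_eq_top.2 hN]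
      _ = Submodule.span K (Set.range (N ∘ u)) := by rw [Submodule.map_span, Set.range_comp]
      _ ≤ _ := by
          rw [Submodule.span_le]
          rintro _ ⟨j, rfl⟩
          induction j using Fin.lastCases with
          | last => simp [hu.apply_last]
          | cast i => exact Submodule.subset_span ⟨i, rfl⟩
  let ub := basisOfTopLeSpanOfCardEqFinrank u hspan.ge (by simp [hX])
  let wb := basisOfTopLeSpanOfCardEqFinrank _ hNspan.ge (by simp [hY])
  have hwb (j : Fin n) : wb.repr (N (u j.castSucc)) = Finsupp.single j 1 := by
    rw [← wb.repr_self, coe_basisOfTopLeSpanOfCardEqFinrank]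
  refine ⟨ub, wb, fun i b => ⟨?_, ?_⟩⟩ <;> rw [coe_basisOfTopLeSpanOfCardEqFinrank]
  · induction i using Fin.lastCases with
    | last => simp [hu.apply_last, b.isLt.ne']
    | cast j => simp [hwb, Finsupp.single_apply, Fin.ext_iff]
  · induction i using Fin.cases with
    | zero => simp [hu.apply_zero, add_comm 1]
    | succ j => simp [hu.apply_succ, hwb, Finsupp.single_apply, Fin.ext_iff, add_comm]

end Pencil

theorem isIdentityTensor_of_apply_dualBasis {p : ℕ} {V : Fin (p + 1) → Type*}
    [∀ j, AddCommGroup (V j)] [∀ j, Module ℂ (V j)] {k : Fin (p + 1) → ℕ}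
    {A : MultilinearMap ℂ (fun j : Fin (p + 1) => Module.Dual ℂ (V j)) ℂ}
    (e : ∀ j, Basis (Fin (k j + 1)) ℂ (V j))
    (h : ∀ a : ∀ j, Fin (k j + 1), A (fun j => (e j).dualBasis (a j)) =
      if (a 0 : ℕ) = ∑ j ∈ univ.erase 0, (a j : ℕ) then 1 else 0) :
    IsIdentityTensor k A := by
  let G : MultilinearMap ℂ (fun j : Fin (p + 1) => Module.Dual ℂ (V j)) ℂ :=
    ∑ ind ∈ univ.filter fun ind : ∀ j, Fin (k j + 1) =>
        (ind 0 : ℕ) = ∑ j ∈ univ.erase 0, (ind j : ℕ),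
      (MultilinearMap.mkPiAlgebra ℂ (Fin (p + 1)) ℂ).compLinearMap
        fun j => Module.Dual.eval ℂ (V j) (e j (ind j))
  have hG (ξ : ∀ j, Module.Dual ℂ (V j)) :
      G ξ = ∑ ind ∈ univ.filter fun ind : ∀ j, Fin (k j + 1) =>
          (ind 0 : ℕ) = ∑ j ∈ univ.erase 0, (ind j : ℕ),
        ∏ j, ξ j (e j (ind j)) := by
    simp [G]
  have hAG : A = G := Basis.ext_multilinear (fun j => (e j).dualBasis) fun a => by
    rw [h, hG]
    simp only [Basis.dualBasis_apply_self, Finset.prod_boole, Finset.mem_univ, forall_const,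
      ← funext_iff, Finset.sum_ite_eq', Finset.mem_filter, true_and]
  exact ⟨e, fun ξ => by rw [hAG, hG]⟩

theorem IsIdentityTensor.exists_eq_compLinearMap {p : ℕ} {V : Fin (p + 1) → Type*}
    [∀ j, AddCommGroup (V j)] [∀ j, Module ℂ (V j)] {k : Fin (p + 1) → ℕ}
    {A B : MultilinearMap ℂ (fun j : Fin (p + 1) => Module.Dual ℂ (V j)) ℂ}
    (hA : IsIdentityTensor k A) (hB : IsIdentityTensor k B) :
    ∃ g : ∀ i, V i ≃ₗ[ℂ] V i, B = A.compLinearMap fun i => (g i : V i →ₗ[ℂ] V i).dualMap := by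
  obtain ⟨e, he⟩ := hA
  obtain ⟨e', he'⟩ := hB
  refine ⟨fun i => (e i).equiv (e' i) (Equiv.refl _), MultilinearMap.ext fun ξ => ?_⟩
  simp [he, he', Basis.equiv_apply]

theorem Module.Basis.dualBasis_map_evalEquiv_symm {K M ι : Type*} [Field K] [AddCommGroup M]
    [Module K M] [FiniteDimensional K M] [Finite ι] [DecidableEq ι] (b : Basis ι K (Dual K M)) :
    (b.dualBasis.map (evalEquiv K M).symm).dualBasis = b :=
  Basis.eq_of_apply_eq fun i => (b.dualBasis.map (evalEquiv K M).symm).ext fun j => by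
    rw [Basis.dualBasis_apply_self, Basis.map_apply, apply_evalEquiv_symm_apply,
      Basis.dualBasis_apply_self]
    simp only [eq_comm]

section Format

variable {V : Fin (2 + 1) → Type*} [∀ j, AddCommGroup (V j)] [∀ j, Module ℂ (V j)]

def dualTriple (φ : Dual ℂ (V 0)) (ψ : Dual ℂ (V 1)) (l : Dual ℂ (V 2)) :
    ∀ j, Dual ℂ (V j) :=
  Fin.cons φ (Fin.cons ψ (Fin.cons l finZeroElim))

@[simp]
theorem update_dualTriple_zero (φ φ' : Dual ℂ (V 0)) (ψ : Dual ℂ (V 1)) (l : Dual ℂ (V 2)) :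
    Function.update (dualTriple φ ψ l) 0 φ' = dualTriple φ' ψ l := by
  ext j : 1; fin_cases j <;> rfl

@[simp]
theorem update_dualTriple_one (φ : Dual ℂ (V 0)) (ψ ψ' : Dual ℂ (V 1)) (l : Dual ℂ (V 2)) :
    Function.update (dualTriple φ ψ l) 1 ψ' = dualTriple φ ψ' l := by
  ext j : 1; fin_cases j <;> rfl

@[simp]
theorem update_dualTriple_two (φ : Dual ℂ (V 0)) (ψ : Dual ℂ (V 1)) (l l' : Dual ℂ (V 2)) :
    Function.update (dualTriple φ ψ l) 2 l' = dualTriple φ ψ l' := by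
  ext j : 1; fin_cases j <;> rfl

variable [∀ j, FiniteDimensional ℂ (V j)]
  (A : MultilinearMap ℂ (fun j : Fin (2 + 1) => Module.Dual ℂ (V j)) ℂ)

noncomputable def sliceMap : Dual ℂ (V 1) →ₗ[ℂ] Dual ℂ (V 0) →ₗ[ℂ] V 2 :=
  (LinearMap.mk₂ ℂ (fun ψ φ => A.toLinearMap (dualTriple φ ψ 0) 2)
    (fun ψ ψ' φ => LinearMap.ext fun l => by
      simpa using A.map_update_add (dualTriple φ 0 l) 1 ψ ψ')
    (fun c ψ φ => LinearMap.ext fun l => by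
      simpa using A.map_update_smul (dualTriple φ 0 l) 1 c ψ)
    (fun ψ φ φ' => LinearMap.ext fun l => by
      simpa using A.map_update_add (dualTriple 0 ψ l) 0 φ φ')
    (fun c ψ φ => LinearMap.ext fun l => by
      simpa using A.map_update_smul (dualTriple 0 ψ l) 0 c φ)).compr₂
    (evalEquiv ℂ (V 2)).symm.toLinearMap

theorem apply_sliceMap (ψ : Dual ℂ (V 1)) (φ : Dual ℂ (V 0)) (l : Dual ℂ (V 2)) :
    l (sliceMap A ψ φ) = A (dualTriple φ ψ l) := by
  simp [sliceMap]

variable {A}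

theorem TensorNondegenerate.sliceMap_surjective (hA : TensorNondegenerate A) {ψ : Dual ℂ (V 1)}
    (hψ : ψ ≠ 0) : Function.Surjective (sliceMap A ψ) := by
  intro v
  obtain ⟨φ, hφ⟩ := hA 2 (by decide) (dualTriple 0 ψ 0)
    (fun i hi0 hi2 => by fin_cases i <;> simp_all [dualTriple]) v
  refine ⟨φ, (LinearEquiv.symm_apply_eq _).2 (LinearMap.ext fun l => ?_)⟩
  simpa using hφ l

theorem TensorNondegenerate.isSurjectivePencil (hA : TensorNondegenerate A)
    {ψ ψ' : Dual ℂ (V 1)} (hψ : LinearIndependent ℂ ![ψ, ψ']) :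
    IsSurjectivePencil (sliceMap A ψ) (sliceMap A ψ') := by
  intro a b hab
  have hne : a • ψ + b • ψ' ≠ 0 := fun h => by
    obtain ⟨rfl, rfl⟩ := LinearIndependent.pair_iff.1 hψ a b h
    simp at hab
  simpa using hA.sliceMap_surjective hne

theorem TensorNondegenerate.isIdentityTensor (hA : TensorNondegenerate A) {n : ℕ}
    (h0 : finrank ℂ (V 0) = n + 2) (h1 : finrank ℂ (V 1) = 2) (h2 : finrank ℂ (V 2) = n + 1) :
    IsIdentityTensor ![n + 1, 1, n] A := by
  let e1 := Module.finBasisOfFinrankEq ℂ (V 1) h1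
  have hind : LinearIndependent ℂ ![e1.dualBasis 1, e1.dualBasis 0] := by
    refine LinearIndependent.pair_symm_iff.1 ?_
    rw [show ![e1.dualBasis 0, e1.dualBasis 1] = ⇑e1.dualBasis by ext i; fin_cases i <;> rfl]
    exact e1.dualBasis.linearIndependent
  have hpencil := hA.isSurjectivePencil hind
  obtain ⟨u, w, huw⟩ := hpencil.exists_basis_kronecker (by rw [Subspace.dual_finrank_eq, h0]) h2
  let e0 := u.dualBasis.map (evalEquiv ℂ (V 0)).symm
  let e : ∀ j : Fin (2 + 1), Basis (Fin (![n + 1, 1, n] j + 1)) ℂ (V j) :=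
    Fin.cons e0 (Fin.cons e1 (Fin.cons w finZeroElim))
  refine isIdentityTensor_of_apply_dualBasis (p := 2) e fun a => ?_
  have ha : (fun j => (e j).dualBasis (a j)) =
      dualTriple (u (a 0)) (e1.dualBasis (a 1)) (w.dualBasis (a 2)) := by
    ext j : 1
    fin_cases j
    · exact congrArg (· (a 0)) u.dualBasis_map_evalEquiv_symm
    · rfl
    · rfl
  have hsum : ∑ j ∈ univ.erase 0, (a j : ℕ) = a 1 + a 2 := by
    have := Finset.add_sum_erase univ (fun j => (a j : ℕ)) (mem_univ 0)
    rw [Fin.sum_univ_three] at this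
    omega
  have key (i : Fin (n + 2)) (c : Fin 2) (b : Fin (n + 1)) :
      A (dualTriple (u i) (e1.dualBasis c) (w.dualBasis b)) =
        if (i : ℕ) = c + b then 1 else 0 := by
    rw [← apply_sliceMap, Basis.dualBasis_apply]
    fin_cases c
    · simpa using (huw i b).1
    · simpa using (huw i b).2
  rw [ha, hsum]
  exact key (a 0) (a 1) (a 2)

end Format

/-- The action of `g` on a tensor viewed as a multilinear form on the duals is
`(g • A) ξ = A (fun i => ξ i ∘ g i)`. -/
theorem nondegenerate_two_k_kplusone_is_identity
    (k : ℕ) (hk : 2 ≤ k) (V : Fin (2 + 1) → Type*)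
    [∀ j, AddCommGroup (V j)] [∀ j, Module ℂ (V j)] [∀ j, FiniteDimensional ℂ (V j)]
    (hdim0 : Module.finrank ℂ (V 0) = k + 1)
    (hdim1 : Module.finrank ℂ (V 1) = 2)
    (hdim2 : Module.finrank ℂ (V 2) = k)
    (A : MultilinearMap ℂ (fun j : Fin (2 + 1) => Module.Dual ℂ (V j)) ℂ)
    (hA : TensorNondegenerate A) :
    IsIdentityTensor ![k, 1, k - 1] A ∧
    ∀ B : MultilinearMap ℂ (fun j : Fin (2 + 1) => Module.Dual ℂ (V j)) ℂ,
      TensorNondegenerate B →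
        ∃ g : ∀ i, V i ≃ₗ[ℂ] V i,
          B = A.compLinearMap fun i => ((g i : V i →ₗ[ℂ] V i)).dualMap := by
  obtain ⟨n, rfl⟩ : ∃ n, k = n + 1 := ⟨k - 1, by omega⟩
  have hid (B : MultilinearMap ℂ (fun j : Fin (2 + 1) => Module.Dual ℂ (V j)) ℂ)
      (hB : TensorNondegenerate B) : IsIdentityTensor ![n + 1, 1, n + 1 - 1] B :=
    hB.isIdentityTensor hdim0 hdim1 hdim2
  exact ⟨hid A hA, fun B hB => (hid A hA).exists_eq_compLinearMap (hid B hB)⟩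
end

section
/- Every identity matrix A ∈ V_0 ⊗ ⋯ ⊗ V_p of boundary format is nondegenerate. -/
open Module Finset

variable {p : ℕ} {V : Fin (p + 1) → Type*}
  [∀ j, AddCommGroup (V j)] [∀ j, Module ℂ (V j)] [∀ j, FiniteDimensional ℂ (V j)]

/-- Every identity matrix of boundary format is nondegenerate. -/
theorem identity_nondegenerate
    (hp : 2 ≤ p) (k : Fin (p + 1) → ℕ) (hk : ∀ j, 1 ≤ k j)
    (hdim : ∀ j, Module.finrank ℂ (V j) = k j + 1)
    (hbf : k 0 = ∑ j ∈ Finset.univ.erase (0 : Fin (p + 1)), k j)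
    (A : MultilinearMap ℂ (fun j : Fin (p + 1) => Module.Dual ℂ (V j)) ℂ)
    (hA : IsIdentityTensor k A) :
    TensorNondegenerate A := by
  classical
  obtain ⟨e, he⟩ := hA
  intro j hj ξ hξ v
  set I : Finset (Fin (p + 1)) := (Finset.univ.erase 0).erase j with hIdef
  have hjmem : j ∈ Finset.univ.erase (0 : Fin (p + 1)) :=
    Finset.mem_erase.mpr ⟨hj, Finset.mem_univ j⟩
  have hImem : ∀ i ∈ I, i ≠ 0 ∧ i ≠ j := by
    intro i hi
    rw [hIdef, Finset.mem_erase, Finset.mem_erase] at hi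
    exact ⟨hi.2.1, hi.1⟩
  have hImem' : ∀ i : Fin (p + 1), i ≠ 0 → i ≠ j → i ∈ I := by
    intro i h0 hj'
    rw [hIdef, Finset.mem_erase, Finset.mem_erase]
    exact ⟨hj', h0, Finset.mem_univ i⟩
  -- existence of nonzero basis coefficient
  have hex : ∀ i ∈ I, ∃ n : ℕ, ∃ h : n < k i + 1, ξ i (e i ⟨n, h⟩) ≠ 0 := by
    intro i hi
    by_contra hc
    push_neg at hc
    refine hξ i (hImem i hi).1 (hImem i hi).2 ?_
    refine (e i).ext fun m => ?_
    simpa using hc m.1 m.2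
  -- minimal nonzero index
  obtain ⟨a, ha1, ha2⟩ : ∃ a : ∀ i, Fin (k i + 1),
      (∀ i ∈ I, ξ i (e i (a i)) ≠ 0) ∧
      (∀ i ∈ I, ∀ m : Fin (k i + 1), (m : ℕ) < (a i : ℕ) → ξ i (e i m) = 0) := by
    refine ⟨fun i => if h : ∃ n : ℕ, ∃ hn : n < k i + 1, ξ i (e i ⟨n, hn⟩) ≠ 0
      then ⟨Nat.find h, (Nat.find_spec h).choose⟩ else ⟨0, Nat.succ_pos _⟩, ?_, ?_⟩
    · intro i hi
      beta_reduce
      rw [dif_pos (hex i hi)]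
      exact (Nat.find_spec (hex i hi)).choose_spec
    · intro i hi m hm
      beta_reduce at hm
      rw [dif_pos (hex i hi)] at hm
      simp only [Fin.val_mk] at hm
      have h1 := Nat.find_min (hex i hi) hm
      push_neg at h1
      simpa using h1 m.2
  set d : ℕ := ∑ i ∈ I, ((a i : ℕ)) with hddef
  have hkI : k 0 = k j + ∑ i ∈ I, k i := by
    rw [hbf, ← Finset.add_sum_erase _ _ hjmem, ← hIdef]
  have hdle : d + k j ≤ k 0 := by
    have h1 : d ≤ ∑ i ∈ I, k i :=
      Finset.sum_le_sum fun i _ => Nat.lt_succ_iff.mp (a i).2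
    omega
  have hemb : ∀ t : Fin (k j + 1), (t : ℕ) + d < k 0 + 1 := by
    intro t
    have := t.isLt
    omega
  set S : Finset (∀ i, Fin (k i + 1)) := Finset.univ.filter
      (fun ind : ∀ i, Fin (k i + 1) =>
        (ind 0 : ℕ) = ∑ i ∈ Finset.univ.erase (0 : Fin (p + 1)), (ind i : ℕ)) with hSdef
  have hdecomp : ∀ ind : ∀ i, Fin (k i + 1), ind ∈ S →
      (ind 0 : ℕ) = (ind j : ℕ) + ∑ i ∈ I, (ind i : ℕ) := by
    intro ind hind
    rw [hSdef, Finset.mem_filter] at hind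
    have h2 := hind.2
    rw [← Finset.add_sum_erase _ _ hjmem, ← hIdef] at h2
    exact h2
  -- vanishing of low-degree products
  have hT0 : ∀ ind : ∀ i, Fin (k i + 1), (∑ i ∈ I, (ind i : ℕ)) < d →
      (∏ i ∈ I, ξ i (e i (ind i))) = 0 := by
    intro ind hlt
    have hco : ∃ i ∈ I, (ind i : ℕ) < (a i : ℕ) := by
      by_contra hcon
      push_neg at hcon
      have := Finset.sum_le_sum hcon
      omega
    obtain ⟨i, hiI, hilt⟩ := hco
    exact Finset.prod_eq_zero hiI (ha2 i hiI _ hilt)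
  -- matrix entries below the shifted diagonal vanish
  have hM0 : ∀ (m : Fin (k j + 1)) (n : Fin (k 0 + 1)), (n : ℕ) < (m : ℕ) + d →
      (∑ ind ∈ S with (ind j, ind 0) = (m, n), ∏ i ∈ I, ξ i (e i (ind i))) = 0 := by
    intro m n hlt
    refine Finset.sum_eq_zero fun ind hind => ?_
    rw [Finset.mem_filter, Prod.mk.injEq] at hind
    obtain ⟨hS', hj', h0'⟩ := hind
    have hd' := hdecomp ind hS'
    rw [hj', h0'] at hd'
    exact hT0 ind (by omega)
  -- diagonal entries
  have hQ : (∏ i ∈ I, ξ i (e i (a i))) ≠ 0 :=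
    Finset.prod_ne_zero_iff.mpr fun i hi => ha1 i hi
  have hMdiag : ∀ (m : Fin (k j + 1)) (n : Fin (k 0 + 1)), (n : ℕ) = (m : ℕ) + d →
      (∑ ind ∈ S with (ind j, ind 0) = (m, n), ∏ i ∈ I, ξ i (e i (ind i)))
        = ∏ i ∈ I, ξ i (e i (a i)) := by
    intro m n hn
    set ind₀ : ∀ i, Fin (k i + 1) := Function.update (Function.update a 0 n) j m with hind₀
    have hind₀0 : ind₀ 0 = n := by
      rw [hind₀, Function.update_of_ne (Ne.symm hj), Function.update_self]
    have hind₀j : ind₀ j = m := by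
      rw [hind₀, Function.update_self]
    have hind₀I : ∀ i ∈ I, ind₀ i = a i := by
      intro i hi
      rw [hind₀, Function.update_of_ne (hImem i hi).2, Function.update_of_ne (hImem i hi).1]
    have hmem : ind₀ ∈ S.filter (fun ind => (ind j, ind 0) = (m, n)) := by
      rw [Finset.mem_filter, hSdef, Finset.mem_filter]
      refine ⟨⟨Finset.mem_univ _, ?_⟩, by rw [hind₀j, hind₀0]⟩
      rw [← Finset.add_sum_erase _ _ hjmem, ← hIdef, hind₀0, hind₀j, hn]
      congr 1
      exact Finset.sum_congr rfl fun i hi => by rw [hind₀I i hi]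
    rw [Finset.sum_eq_single ind₀ ?_ (fun hnot => absurd hmem hnot)]
    · exact Finset.prod_congr rfl fun i hi => by rw [hind₀I i hi]
    · intro ind hind hne
      rw [Finset.mem_filter, Prod.mk.injEq] at hind
      obtain ⟨hS', hj', h0'⟩ := hind
      have hd' := hdecomp ind hS'
      rw [hj', h0', hn] at hd'
      have hsum : ∑ i ∈ I, ((ind i : ℕ)) = d := by omega
      by_cases hcase : ∃ i ∈ I, (ind i : ℕ) < (a i : ℕ)
      · obtain ⟨i, hiI, hilt⟩ := hcase
        exact Finset.prod_eq_zero hiI (ha2 i hiI _ hilt)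
      · exfalso
        push_neg at hcase
        have heq : ∀ i ∈ I, (a i : ℕ) = (ind i : ℕ) := by
          rw [← Finset.sum_eq_sum_iff_of_le hcase]
          rw [hsum, hddef]
        refine hne (funext fun i => ?_)
        by_cases h0c : i = 0
        · subst h0c; rw [h0', hind₀0]
        · by_cases hjc : i = j
          · subst hjc; rw [hj', hind₀j]
          · have hiI := hImem' i h0c hjc
            rw [hind₀I i hiI]
            exact Fin.ext (heq i hiI).symm
  -- solve the triangular linear system
  obtain ⟨z, hz⟩ : ∃ z : Fin (k j + 1) → ℂ, ∀ m : Fin (k j + 1),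
      (∑ t : Fin (k j + 1),
        (∑ ind ∈ S with (ind j, ind 0) = (m, (⟨(t : ℕ) + d, hemb t⟩ : Fin (k 0 + 1))),
          ∏ i ∈ I, ξ i (e i (ind i))) * z t) = (e j).repr v m := by
    set N : Matrix (Fin (k j + 1)) (Fin (k j + 1)) ℂ := Matrix.of fun m t =>
      (∑ ind ∈ S with (ind j, ind 0) = (m, (⟨(t : ℕ) + d, hemb t⟩ : Fin (k 0 + 1))),
        ∏ i ∈ I, ξ i (e i (ind i))) with hNdef
    have hNtri : N.BlockTriangular id := by
      intro m t hlt
      simp only [id] at hlt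
      rw [hNdef]
      exact hM0 m _ (by simpa using Nat.add_lt_add_right hlt d)
    have hNdiag : ∀ m, N m m = ∏ i ∈ I, ξ i (e i (a i)) := by
      intro m
      rw [hNdef]
      exact hMdiag m _ rfl
    have hdet : N.det ≠ 0 := by
      rw [Matrix.det_of_upperTriangular hNtri]
      exact Finset.prod_ne_zero_iff.mpr fun m _ => by rw [hNdiag m]; exact hQ
    refine ⟨N⁻¹.mulVec fun m => (e j).repr v m, fun m => ?_⟩
    have hNz : N.mulVec (N⁻¹.mulVec fun m => (e j).repr v m) = fun m => (e j).repr v m := by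
      rw [Matrix.mulVec_mulVec, Matrix.mul_nonsing_inv _ (isUnit_iff_ne_zero.mpr hdet),
        Matrix.one_mulVec]
    have := congrFun hNz m
    rw [Matrix.mulVec, dotProduct] at this
    exact this
  -- assemble the coefficient vector for φ
  obtain ⟨y, hy1, hy2⟩ : ∃ y : Fin (k 0 + 1) → ℂ,
      (∀ t : Fin (k j + 1), y ⟨(t : ℕ) + d, hemb t⟩ = z t) ∧
      (∀ n : Fin (k 0 + 1), (¬ ∃ t : Fin (k j + 1), (n : ℕ) = (t : ℕ) + d) → y n = 0) := by
    refine ⟨fun n => if h : ∃ t : Fin (k j + 1), (n : ℕ) = (t : ℕ) + d then z h.choose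
      else 0, ?_, ?_⟩
    · intro t
      have hex' : ∃ t' : Fin (k j + 1),
          ((⟨(t : ℕ) + d, hemb t⟩ : Fin (k 0 + 1)) : ℕ) = (t' : ℕ) + d := ⟨t, rfl⟩
      beta_reduce
      rw [dif_pos hex']
      have h2 : hex'.choose = t := by
        have := hex'.choose_spec
        simp only [Fin.val_mk] at this
        exact Fin.ext (by omega)
      rw [h2]
    · intro n hn
      beta_reduce
      rw [dif_neg hn]
  -- the functional φ
  refine ⟨(e 0).constr ℂ y, fun lam => ?_⟩
  rw [he]
  -- rewrite each summand
  have hsummand : ∀ ind : ∀ i, Fin (k i + 1),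
      (∏ i, (Function.update (Function.update ξ 0 ((e 0).constr ℂ y)) j lam) i (e i (ind i)))
        = y (ind 0) * (lam (e j (ind j)) * ∏ i ∈ I, ξ i (e i (ind i))) := by
    intro ind
    have f0 : (Function.update (Function.update ξ 0 ((e 0).constr ℂ y)) j lam) 0
        = (e 0).constr ℂ y := by
      rw [Function.update_of_ne (Ne.symm hj), Function.update_self]
    have fj : (Function.update (Function.update ξ 0 ((e 0).constr ℂ y)) j lam) j = lam :=
      Function.update_self _ _ _
    have fI : ∀ i ∈ I, (Function.update (Function.update ξ 0 ((e 0).constr ℂ y)) j lam) i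
        = ξ i := by
      intro i hi
      rw [Function.update_of_ne (hImem i hi).2, Function.update_of_ne (hImem i hi).1]
    rw [← Finset.mul_prod_erase Finset.univ _ (Finset.mem_univ (0 : Fin (p + 1))),
      ← Finset.mul_prod_erase _ _ hjmem, ← hIdef, f0, fj, Basis.constr_basis]
    congr 1
    congr 1
    exact Finset.prod_congr rfl fun i hi => by rw [fI i hi]
  rw [Finset.sum_congr rfl fun ind _ => hsummand ind]
  -- group fiberwise by (ind j, ind 0)
  rw [← Finset.sum_fiberwise S (fun ind => (ind j, ind 0))
    (fun ind => y (ind 0) * (lam (e j (ind j)) * ∏ i ∈ I, ξ i (e i (ind i))))]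
  rw [Fintype.sum_prod_type]
  have hinner : ∀ (m : Fin (k j + 1)) (n : Fin (k 0 + 1)),
      (∑ ind ∈ S with (ind j, ind 0) = (m, n),
        y (ind 0) * (lam (e j (ind j)) * ∏ i ∈ I, ξ i (e i (ind i))))
      = lam (e j m) * (y n *
        (∑ ind ∈ S with (ind j, ind 0) = (m, n), ∏ i ∈ I, ξ i (e i (ind i)))) := by
    intro m n
    rw [Finset.mul_sum]
    simp_rw [Finset.mul_sum]
    refine Finset.sum_congr rfl fun ind hind => ?_
    rw [Finset.mem_filter, Prod.mk.injEq] at hind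
    rw [hind.2.1, hind.2.2]
    ring
  rw [Finset.sum_congr rfl fun m _ => Finset.sum_congr rfl fun n _ => hinner m n]
  -- evaluate the inner sums using the linear system
  have hcol : ∀ m : Fin (k j + 1),
      (∑ n : Fin (k 0 + 1), y n *
        (∑ ind ∈ S with (ind j, ind 0) = (m, n), ∏ i ∈ I, ξ i (e i (ind i))))
      = (e j).repr v m := by
    intro m
    have hzero : ∀ n ∈ Finset.univ,
        n ∉ Finset.univ.image (fun t : Fin (k j + 1) => (⟨(t : ℕ) + d, hemb t⟩ : Fin (k 0 + 1)))
        → y n * (∑ ind ∈ S with (ind j, ind 0) = (m, n), ∏ i ∈ I, ξ i (e i (ind i))) = 0 := by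
      intro n _ hn
      by_cases hcase : ∃ t : Fin (k j + 1), (n : ℕ) = (t : ℕ) + d
      · exfalso
        refine hn (Finset.mem_image.mpr ⟨hcase.choose, Finset.mem_univ _, ?_⟩)
        exact Fin.ext (by simpa using hcase.choose_spec.symm)
      · rw [hy2 n hcase, zero_mul]
    rw [← Finset.sum_subset (Finset.subset_univ _) hzero]
    rw [Finset.sum_image (fun t1 _ t2 _ hEq => by
      have h' : (t1 : ℕ) + d = (t2 : ℕ) + d := congrArg Fin.val hEq
      exact Fin.ext (by omega))]
    calc ∑ t : Fin (k j + 1),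
        y ⟨(t : ℕ) + d, hemb t⟩ *
          (∑ ind ∈ S with (ind j, ind 0) = (m, (⟨(t : ℕ) + d, hemb t⟩ : Fin (k 0 + 1))),
            ∏ i ∈ I, ξ i (e i (ind i)))
        = ∑ t : Fin (k j + 1),
          (∑ ind ∈ S with (ind j, ind 0) = (m, (⟨(t : ℕ) + d, hemb t⟩ : Fin (k 0 + 1))),
            ∏ i ∈ I, ξ i (e i (ind i))) * z t := by
          refine Finset.sum_congr rfl fun t _ => ?_
          rw [hy1 t, mul_comm]
      _ = (e j).repr v m := hz m
  have houter : ∀ m : Fin (k j + 1),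
      (∑ n : Fin (k 0 + 1), lam (e j m) * (y n *
        (∑ ind ∈ S with (ind j, ind 0) = (m, n), ∏ i ∈ I, ξ i (e i (ind i)))))
      = lam (e j m) * ((e j).repr v m) := by
    intro m
    rw [← Finset.mul_sum, hcol m]
  rw [Finset.sum_congr rfl fun m (_ : m ∈ Finset.univ) => houter m]
  -- expand lam v in the basis
  conv_rhs => rw [← Basis.sum_repr (e j) v]
  rw [map_sum]
  exact Finset.sum_congr rfl fun m _ => by rw [map_smul, smul_eq_mul, mul_comm]
end
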